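/- arXiv:2011.14222 — 5 statements merged into one kernel-verified Lean document; each statement's English description precedes it below -/
import Mathlib

section
/- Fix t > 0 and let μ be the standard Cauchy distribution. For each u ∈ ℝ the equation ∫ dμ(x)/((u−x)² + v²) = 1/t in the unknown v > 0 has a unique positive solution v = v_t(u), and this solution satisfies the algebraic equation u² = (1/v)(1+v)(t − v − v²). -/
/-!
Since Cauchy laws convolve by adding scales, the integral has the closed form
`∫ dμ(x)/((u-x)² + v²) = (1 + v) / (v (u² + (1 + v)²))`, proved for `u ≠ 0` via an explicit primitive
(partial fractions), and at `u = 0` by continuity in `u`. The equation thus becomes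
`t = v (u² + (1 + v)²) / (1 + v)`, whose right side increases strictly from `0` to `∞` on `v ≥ 0`;
the intermediate value theorem gives the unique root, and solving for `u²` the algebraic relation.
-/

open MeasureTheory Real Filter Topology

lemma tendsto_one_add_sq_div_atTop (u v : ℝ) :
    Tendsto (fun x : ℝ => (1 + x ^ 2) / ((x - u) ^ 2 + v ^ 2)) atTop (𝓝 1) := by
  have hcont : ContinuousAt (fun y : ℝ => (y ^ 2 + 1) / ((1 - u * y) ^ 2 + (v * y) ^ 2)) 0 :=
    ContinuousAt.div (by fun_prop) (by fun_prop) (by norm_num)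
  have h := hcont.tendsto.comp tendsto_inv_atTop_zero
  rw [show ((0 : ℝ) ^ 2 + 1) / ((1 - u * 0) ^ 2 + (v * 0) ^ 2) = 1 by norm_num] at h
  refine h.congr' ?_
  filter_upwards [eventually_gt_atTop 0, eventually_gt_atTop u] with x hx hxu
  have : 0 < (x - u) ^ 2 + v ^ 2 := by have := sub_pos.2 hxu; positivity
  simp only [Function.comp_apply]
  field_simp

lemma tendsto_log_one_add_sq_sub_log_atTop (u v : ℝ) :
    Tendsto (fun x : ℝ => log (1 + x ^ 2) - log ((x - u) ^ 2 + v ^ 2)) atTop (𝓝 0) := by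
  have h := (continuousAt_log one_ne_zero).tendsto.comp (tendsto_one_add_sq_div_atTop u v)
  rw [log_one] at h
  refine h.congr' ?_
  filter_upwards [eventually_gt_atTop u] with x hx
  have : 0 < (x - u) ^ 2 + v ^ 2 := by have := sub_pos.2 hx; positivity
  exact log_div (by positivity) this.ne'

lemma tendsto_log_one_add_sq_sub_log_atBot (u v : ℝ) :
    Tendsto (fun x : ℝ => log (1 + x ^ 2) - log ((x - u) ^ 2 + v ^ 2)) atBot (𝓝 0) := by
  refine ((tendsto_log_one_add_sq_sub_log_atTop (-u) v).comp tendsto_neg_atBot_atTop).congr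
    fun x => ?_
  simp only [Function.comp_apply]
  ring_nf

lemma cauchy_mul_inv_sq_add_sq_le (u : ℝ) {v : ℝ} (hv : v ≠ 0) (x : ℝ) :
    ‖1 / (π * (1 + x ^ 2)) * (1 / ((u - x) ^ 2 + v ^ 2))‖ ≤ 1 / (π * v ^ 2) * (1 + x ^ 2)⁻¹ := by
  rw [Real.norm_of_nonneg (by positivity)]
  calc 1 / (π * (1 + x ^ 2)) * (1 / ((u - x) ^ 2 + v ^ 2))
      ≤ 1 / (π * (1 + x ^ 2)) * (1 / v ^ 2) := by
        gcongr
        nlinarith [sq_nonneg (u - x)]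
    _ = 1 / (π * v ^ 2) * (1 + x ^ 2)⁻¹ := by field_simp

lemma integrable_cauchy_mul_inv_sq_add_sq (u : ℝ) {v : ℝ} (hv : v ≠ 0) :
    Integrable fun x : ℝ => 1 / (π * (1 + x ^ 2)) * (1 / ((u - x) ^ 2 + v ^ 2)) :=
  (integrable_inv_one_add_sq.const_mul _).mono' (by fun_prop)
    (.of_forall (cauchy_mul_inv_sq_add_sq_le u hv))

-- From the partial fraction decomposition of `1 / ((1 + x²)((x - u)² + v²))`, which degenerates
-- exactly when the poles coincide, i.e. `u = 0`, `v = ±1`.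
noncomputable def cauchyPoissonPrimitive (u v x : ℝ) : ℝ :=
  ((u ^ 2 + v ^ 2 - 1) * arctan x + (1 + u ^ 2 - v ^ 2) / v * arctan ((x - u) / v)
    + u * (log (1 + x ^ 2) - log ((x - u) ^ 2 + v ^ 2)))
    / (π * ((u ^ 2 + v ^ 2 - 1) ^ 2 + 4 * u ^ 2))

lemma hasDerivAt_cauchyPoissonPrimitive {u v : ℝ} (hu : u ≠ 0) (hv : v ≠ 0) (x : ℝ) :
    HasDerivAt (cauchyPoissonPrimitive u v)
      (1 / (π * (1 + x ^ 2)) * (1 / ((u - x) ^ 2 + v ^ 2))) x := by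
  have hx : 0 < 1 + x ^ 2 := by positivity
  have hxu : 0 < (x - u) ^ 2 + v ^ 2 := by positivity
  have hd : 0 < (u ^ 2 + v ^ 2 - 1) ^ 2 + 4 * u ^ 2 := by positivity
  have hlin : HasDerivAt (fun x => (x - u) / v) (1 / v) x :=
    ((hasDerivAt_id x).sub_const u).div_const v
  have hsq₁ : HasDerivAt (fun x => 1 + x ^ 2) (2 * x) x := by
    simpa using (hasDerivAt_pow 2 x).const_add 1
  have hsq₂ : HasDerivAt (fun x => (x - u) ^ 2 + v ^ 2) (2 * (x - u)) x := by
    simpa using (((hasDerivAt_id x).sub_const u).pow 2).add_const (v ^ 2)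
  have h := ((((hasDerivAt_arctan x).const_mul (u ^ 2 + v ^ 2 - 1)).add
    (((hasDerivAt_arctan _).comp x hlin).const_mul ((1 + u ^ 2 - v ^ 2) / v))).add
    (((hsq₁.log hx.ne').sub (hsq₂.log hxu.ne')).const_mul u)).div_const
    (π * ((u ^ 2 + v ^ 2 - 1) ^ 2 + 4 * u ^ 2))
  refine h.congr_deriv ?_
  rw [show (u - x) ^ 2 = (x - u) ^ 2 by ring]
  field_simp
  ring

lemma integral_cauchy_mul_inv_sq_add_sq_of_ne_zero {u v : ℝ} (hu : u ≠ 0) (hv : 0 < v) :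
    ∫ x : ℝ, 1 / (π * (1 + x ^ 2)) * (1 / ((u - x) ^ 2 + v ^ 2))
      = (1 + v) / (v * (u ^ 2 + (1 + v) ^ 2)) := by
  have harctan_top := tendsto_nhds_of_tendsto_nhdsWithin tendsto_arctan_atTop
  have harctan_bot := tendsto_nhds_of_tendsto_nhdsWithin tendsto_arctan_atBot
  have hlin_top : Tendsto (fun x : ℝ => (x - u) / v) atTop atTop :=
    (tendsto_atTop_add_const_right _ (-u) tendsto_id).atTop_div_const hv
  have hlin_bot : Tendsto (fun x : ℝ => (x - u) / v) atBot atBot :=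
    (tendsto_atBot_add_const_right _ (-u) tendsto_id).atBot_div_const hv
  have htop := (((harctan_top.const_mul (u ^ 2 + v ^ 2 - 1)).add
    ((harctan_top.comp hlin_top).const_mul ((1 + u ^ 2 - v ^ 2) / v))).add
    ((tendsto_log_one_add_sq_sub_log_atTop u v).const_mul u)).div_const
    (π * ((u ^ 2 + v ^ 2 - 1) ^ 2 + 4 * u ^ 2))
  have hbot := (((harctan_bot.const_mul (u ^ 2 + v ^ 2 - 1)).add
    ((harctan_bot.comp hlin_bot).const_mul ((1 + u ^ 2 - v ^ 2) / v))).add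
    ((tendsto_log_one_add_sq_sub_log_atBot u v).const_mul u)).div_const
    (π * ((u ^ 2 + v ^ 2 - 1) ^ 2 + 4 * u ^ 2))
  rw [integral_of_hasDerivAt_of_tendsto (hasDerivAt_cauchyPoissonPrimitive hu hv.ne')
    (integrable_cauchy_mul_inv_sq_add_sq u hv.ne') hbot htop]
  have hd : 0 < (u ^ 2 + v ^ 2 - 1) ^ 2 + 4 * u ^ 2 := by positivity
  field_simp
  ring

lemma continuous_integral_cauchy_mul_inv_sq_add_sq {v : ℝ} (hv : v ≠ 0) :
    Continuous fun u : ℝ => ∫ x : ℝ, 1 / (π * (1 + x ^ 2)) * (1 / ((u - x) ^ 2 + v ^ 2)) :=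
  continuous_of_dominated (fun _ => by fun_prop)
    (fun u => .of_forall (cauchy_mul_inv_sq_add_sq_le u hv))
    (integrable_inv_one_add_sq.const_mul _)
    (.of_forall fun x => continuous_const.mul
      (continuous_const.div (by fun_prop) fun u => by positivity))

lemma integral_cauchy_mul_inv_sq_add_sq (u : ℝ) {v : ℝ} (hv : 0 < v) :
    ∫ x : ℝ, 1 / (π * (1 + x ^ 2)) * (1 / ((u - x) ^ 2 + v ^ 2))
      = (1 + v) / (v * (u ^ 2 + (1 + v) ^ 2)) := by
  have hrhs : Continuous fun u : ℝ => (1 + v) / (v * (u ^ 2 + (1 + v) ^ 2)) :=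
    continuous_const.div (by fun_prop) fun u => by positivity
  exact congrFun ((continuous_integral_cauchy_mul_inv_sq_add_sq hv.ne').ext_on
    (dense_compl_singleton 0) hrhs fun u hu => integral_cauchy_mul_inv_sq_add_sq_of_ne_zero hu hv) u

-- The inverse of `t ↦ v_t(u)`: the equation for `v` is `cauchyTime u v = t`.
noncomputable def cauchyTime (u v : ℝ) : ℝ := v * (u ^ 2 + (1 + v) ^ 2) / (1 + v)

lemma integral_cauchy_mul_inv_sq_add_sq_eq_inv_cauchyTime (u : ℝ) {v : ℝ} (hv : 0 < v) :
    ∫ x : ℝ, 1 / (π * (1 + x ^ 2)) * (1 / ((u - x) ^ 2 + v ^ 2)) = (cauchyTime u v)⁻¹ := by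
  rw [integral_cauchy_mul_inv_sq_add_sq u hv, cauchyTime, inv_div]

lemma strictMonoOn_cauchyTime (u : ℝ) : StrictMonoOn (cauchyTime u) (Set.Ici 0) := by
  intro a (ha : 0 ≤ a) b (hb : 0 ≤ b) hab
  rw [cauchyTime, cauchyTime, div_lt_div_iff₀ (by positivity) (by positivity)]
  nlinarith [mul_pos (mul_pos (sub_pos.2 hab) (by positivity : (0 : ℝ) < (1 + a) * (1 + b)))
    (by positivity : (0 : ℝ) < 1 + a + b), mul_nonneg (sq_nonneg u) (sub_pos.2 hab).le]

lemma le_cauchyTime (u : ℝ) {v : ℝ} (hv : 0 ≤ v) : v ≤ cauchyTime u v := by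
  rw [cauchyTime, le_div_iff₀ (by positivity)]
  nlinarith [mul_nonneg hv (sq_nonneg u), mul_nonneg hv (sq_nonneg v)]

lemma exists_cauchyTime_eq (u : ℝ) {t : ℝ} (ht : 0 < t) : ∃ v, 0 < v ∧ cauchyTime u v = t := by
  have hcont : ContinuousOn (cauchyTime u) (Set.Icc 0 (max 1 t)) :=
    ContinuousOn.div (by fun_prop) (by fun_prop) fun v hv => by linarith [hv.1]
  have hbound : t ≤ cauchyTime u (max 1 t) :=
    (le_max_right 1 t).trans (le_cauchyTime u (by positivity))
  obtain ⟨v, hv, hvt⟩ := intermediate_value_Icc (by positivity) hcont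
    ⟨by simp [cauchyTime, ht.le], hbound⟩
  refine ⟨v, hv.1.lt_of_ne ?_, hvt⟩
  rintro rfl
  simp [cauchyTime, ht.ne] at hvt

/-- For the standard Cauchy distribution and fixed `t > 0`, the equation
`∫ dμ(x)/((u−x)² + v²) = 1/t` has a unique positive solution `v`, and any such solution
satisfies `u² = (1/v)(1+v)(t − v − v²)`. -/
theorem cauchy_vt_exists_unique (t : ℝ) (ht : 0 < t) (u : ℝ) :
    (∃! v : ℝ, 0 < v ∧
        ∫ x : ℝ, (1 / (π * (1 + x ^ 2))) * (1 / ((u - x) ^ 2 + v ^ 2)) = 1 / t) ∧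
      ∀ v : ℝ, 0 < v →
        (∫ x : ℝ, (1 / (π * (1 + x ^ 2))) * (1 / ((u - x) ^ 2 + v ^ 2)) = 1 / t) →
          u ^ 2 = (1 / v) * (1 + v) * (t - v - v ^ 2) := by
  have key : ∀ v, 0 < v →
      ((∫ x : ℝ, (1 / (π * (1 + x ^ 2))) * (1 / ((u - x) ^ 2 + v ^ 2)) = 1 / t) ↔
        cauchyTime u v = t) := fun v hv => by
    rw [integral_cauchy_mul_inv_sq_add_sq_eq_inv_cauchyTime u hv, one_div, inv_inj]
  obtain ⟨v, hv, hvt⟩ := exists_cauchyTime_eq u ht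
  refine ⟨⟨v, ⟨hv, (key v hv).2 hvt⟩, fun w ⟨hw, hwt⟩ => ?_⟩, fun w hw hwt => ?_⟩
  · exact (strictMonoOn_cauchyTime u).injOn hw.le hv.le (((key w hw).1 hwt).trans hvt.symm)
  · rw [← (key w hw).1 hwt, cauchyTime]
    field_simp
    ring
end

section
/- Fix t > 0 and let v = v_t(u) be defined implicitly by u² = (1/v)(1+v)(t−v−v²) for v > 0. Define ψ_t(u) = u + u·v_t(u)/(1+v_t(u)). Then ψ_t is differentiable with ψ_t'(u) = (t + 4v²(1+v)²)/((1+v)(t + 2v²(1+v))), where v = v_t(u). -/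
/-!
Writing `R x = (1 / x) (1 + x) (t - x - x²)`, the difference of two values factors as
`R a - R b = -(a - b) (t / (a b) + 2 + a + b)`, and for `a, b > 0` the second factor is at least `2`.
Applied to `a = v u`, `b = v u₀` with `R (v u) = u²`, this gives `|v u - v u₀| ≤ |u² - u₀²| / 2`,
so `v` is continuous; dividing by `u - u₀` and letting `u → u₀` then gives
`v'(u₀) = -2 u₀ / (t / x² + 2 + 2 x)` with `x = v u₀`, and `ψ'` follows by the quotient rule.
-/

open Filter Topology

section DividedDifference

variable {v h K : ℝ → ℝ} {u₀ : ℝ}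

theorem continuousAt_of_sub_mul_eq {c : ℝ} (hc : 0 < c) (hK : ∀ u, c ≤ |K u|)
    (hh : ContinuousAt h u₀) (heq : ∀ u, (v u - v u₀) * K u = h u - h u₀) :
    ContinuousAt v u₀ := by
  have hbound : ∀ u, dist (v u) (v u₀) ≤ |h u - h u₀| / c := fun u => by
    rw [Real.dist_eq, le_div_iff₀ hc, ← heq, abs_mul]
    exact mul_le_mul_of_nonneg_left (hK u) (abs_nonneg _)
  have hlim : Tendsto (fun u => |h u - h u₀| / c) (𝓝 u₀) (𝓝 0) := by
    simpa using ((hh.sub_const (h u₀)).abs).div_const c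
  exact tendsto_iff_dist_tendsto_zero.2 (squeeze_zero (fun _ => dist_nonneg) hbound hlim)

theorem hasDerivAt_of_sub_mul_eq {h' K₀ : ℝ} (hh : HasDerivAt h h' u₀)
    (hK : Tendsto K (𝓝 u₀) (𝓝 K₀)) (hK₀ : K₀ ≠ 0)
    (heq : ∀ u, (v u - v u₀) * K u = h u - h u₀) :
    HasDerivAt v (h' / K₀) u₀ := by
  rw [hasDerivAt_iff_tendsto_slope]
  refine (hh.tendsto_slope.div (hK.mono_left nhdsWithin_le_nhds) hK₀).congr' ?_
  filter_upwards [self_mem_nhdsWithin, (hK.mono_left nhdsWithin_le_nhds).eventually_ne hK₀]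
    with u hu hKu
  rw [Pi.div_apply, slope_def_field, slope_def_field, ← heq, mul_div_right_comm,
    mul_div_cancel_right₀ _ hKu]

end DividedDifference

theorem HasDerivAt.add_mul_div_one_add {v : ℝ → ℝ} {v' u₀ : ℝ} (hv : HasDerivAt v v' u₀)
    (hv₀ : 1 + v u₀ ≠ 0) :
    HasDerivAt (fun u => u + u * v u / (1 + v u))
      (1 + v u₀ / (1 + v u₀) + u₀ * v' / (1 + v u₀) ^ 2) u₀ := by
  have hq := hv.fun_div (hv.const_add 1) hv₀
  simp only [mul_div_assoc]
  refine ((hasDerivAt_id' u₀).fun_add ((hasDerivAt_id' u₀).fun_mul hq)).congr_deriv ?_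
  field_simp
  ring

noncomputable def cauchyRHS (t x : ℝ) : ℝ := 1 / x * (1 + x) * (t - x - x ^ 2)

theorem cauchyRHS_sub_cauchyRHS (t : ℝ) {a b : ℝ} (ha : a ≠ 0) (hb : b ≠ 0) :
    cauchyRHS t a - cauchyRHS t b = -((a - b) * (t / (a * b) + 2 + a + b)) := by
  unfold cauchyRHS
  field_simp
  ring

section Cauchy

variable {t : ℝ} {v : ℝ → ℝ}

theorem cauchy_implicit_hasDerivAt (ht : 0 < t) (hpos : ∀ u, 0 < v u)
    (himp : ∀ u, u ^ 2 = cauchyRHS t (v u)) (u₀ : ℝ) :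
    HasDerivAt v (-(2 * u₀) / (t / (v u₀ * v u₀) + 2 + v u₀ + v u₀)) u₀ := by
  set K : ℝ → ℝ := fun u => t / (v u * v u₀) + 2 + v u + v u₀
  have hKge : ∀ u, 2 ≤ K u := fun u => by
    have : 0 < t / (v u * v u₀) := div_pos ht (mul_pos (hpos u) (hpos u₀))
    linarith [hpos u, hpos u₀]
  have heq : ∀ u, (v u - v u₀) * K u = -u ^ 2 - -u₀ ^ 2 := fun u => by
    linear_combination cauchyRHS_sub_cauchyRHS t (hpos u).ne' (hpos u₀).ne' + himp u - himp u₀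
  have hv : ContinuousAt v u₀ :=
    continuousAt_of_sub_mul_eq two_pos (fun u => (hKge u).trans (le_abs_self _)) (by fun_prop) heq
  have hKlim : Tendsto K (𝓝 u₀) (𝓝 (K u₀)) :=
    (((tendsto_const_nhds.div (hv.mul tendsto_const_nhds)
      (mul_pos (hpos u₀) (hpos u₀)).ne').add_const 2).add hv).add_const _
  have hsq : HasDerivAt (fun u => -u ^ 2) (-(2 * u₀)) u₀ := by
    simpa using (hasDerivAt_pow 2 u₀).fun_neg
  exact hasDerivAt_of_sub_mul_eq hsq hKlim (two_pos.trans_le (hKge u₀)).ne' heq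

end Cauchy

theorem cauchy_psi_deriv_formula {t x u : ℝ} (ht : 0 < t) (hx : 0 < x)
    (h : u ^ 2 = cauchyRHS t x) :
    1 + x / (1 + x) + u * (-(2 * u) / (t / (x * x) + 2 + x + x)) / (1 + x) ^ 2 =
      (t + 4 * x ^ 2 * (1 + x) ^ 2) / ((1 + x) * (t + 2 * x ^ 2 * (1 + x))) := by
  unfold cauchyRHS at h
  field_simp at h ⊢
  linear_combination -2 * x * (t + 2 * x ^ 2 * (1 + x)) * h

/-- Cauchy case: with `v = v_t(u)` defined implicitly by `u² = (1/v)(1+v)(t−v−v²)`, the function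
`ψ_t(u) = u + u v_t(u)/(1+v_t(u))` is differentiable with
`ψ_t'(u) = (t + 4v²(1+v)²)/((1+v)(t + 2v²(1+v)))`. -/
theorem cauchy_psi_deriv (t : ℝ) (ht : 0 < t) (v ψ : ℝ → ℝ)
    (hpos : ∀ u, 0 < v u)
    (himp : ∀ u : ℝ, u ^ 2 = (1 / v u) * (1 + v u) * (t - v u - (v u) ^ 2))
    (hψ : ∀ u : ℝ, ψ u = u + u * v u / (1 + v u)) :
    ∀ u : ℝ, HasDerivAt ψ
      ((t + 4 * (v u) ^ 2 * (1 + v u) ^ 2) / ((1 + v u) * (t + 2 * (v u) ^ 2 * (1 + v u)))) u := by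
  intro u
  have hv := cauchy_implicit_hasDerivAt ht hpos himp u
  rw [show ψ = fun u => u + u * v u / (1 + v u) from funext hψ]
  refine (hv.add_mul_div_one_add (by linarith [hpos u])).congr_deriv ?_
  exact cauchy_psi_deriv_formula ht (hpos u) (himp u)
end

section
/- Fix t > 0 and v = v_t(u) defined implicitly by u² = (1/v)(1+v)(t−v−v²), v > 0. Then d/du [u·v/(1+v)] = v(−t + 2v(1+v)²)/((1+v)(t + 2v²(1+v))). -/
open Real

theorem hasDerivAt_mul_div_one_add {v : ℝ → ℝ} {v' u : ℝ} (hv : HasDerivAt v v' u)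
    (hv₁ : 1 + v u ≠ 0) :
    HasDerivAt (fun x => x * v x / (1 + v x)) ((v u * (1 + v u) + u * v') / (1 + v u) ^ 2) u := by
  refine (((hasDerivAt_id u).mul hv).div (hv.const_add 1) hv₁).congr_deriv ?_
  simp only [Pi.mul_apply, id]
  ring

/-- The derivative `u v'` only involves `u²`, which the implicit equation eliminates. -/
theorem uv_deriv_eq_of_implicit {t w u : ℝ} (ht : 0 < t) (hw : 0 < w)
    (himp : u ^ 2 = (1 / w) * (1 + w) * (t - w - w ^ 2)) :
    (w * (1 + w) + u * (-(2 * u) / (t / w ^ 2 + 2 * (1 + w)))) / (1 + w) ^ 2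
      = w * (-t + 2 * w * (1 + w) ^ 2) / ((1 + w) * (t + 2 * w ^ 2 * (1 + w))) := by
  have hE : 0 < t + 2 * w ^ 2 * (1 + w) := by positivity
  have hD : t / w ^ 2 + 2 * (1 + w) = (t + 2 * w ^ 2 * (1 + w)) / w ^ 2 := by
    field_simp
  rw [hD]
  field_simp at himp ⊢
  linear_combination -2 * himp

/-- Cauchy case: with `v = v_t(u)` defined implicitly by `u² = (1/v)(1+v)(t−v−v²)` and
differentiable with `2u = −(t/v² + 2(1+v)) v'`, one has
`d/du [u v/(1+v)] = v(−t + 2v(1+v)²)/((1+v)(t + 2v²(1+v)))`. -/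
theorem cauchy_uv_deriv (t : ℝ) (ht : 0 < t) (v : ℝ → ℝ)
    (hpos : ∀ u, 0 < v u)
    (himp : ∀ u : ℝ, u ^ 2 = (1 / v u) * (1 + v u) * (t - v u - (v u) ^ 2))
    (hv' : ∀ u : ℝ, HasDerivAt v (-(2 * u) / (t / (v u) ^ 2 + 2 * (1 + v u))) u) :
    ∀ u : ℝ, HasDerivAt (fun u => u * v u / (1 + v u))
      (v u * (-t + 2 * v u * (1 + v u) ^ 2) / ((1 + v u) * (t + 2 * (v u) ^ 2 * (1 + v u)))) u := by
  intro u
  have hv₁ : 1 + v u ≠ 0 := by linarith [hpos u]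
  rw [← uv_deriv_eq_of_implicit ht (hpos u) (himp u)]
  exact hasDerivAt_mul_div_one_add (hv' u) hv₁
end

section
/- Let α ≥ 0, β > 0, s = α + β, and let v = v_s(u₀) be defined implicitly by u₀² = (1/v)(1+v)(s−v−v²), v > 0 (Cauchy case). Define u = f(u₀) = u₀ + ((α−β)/s)·u₀ v/(1+v). Then du/du₀ = ((1+v)(s² + 4αv²(1+v)) − (α−β)s v) / (s(1+v)(s + 2v²(1+v))). -/
/-!
Write `g(w) = (1+w)(s-w-w²)/w`, so that `v` is determined by `g(v(u₀)) = u₀²`. For `a, b > 0` one has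
`a - b = -K(a,b) (g a - g b)` with `K(a,b) = ab/(s + ab(2+a+b)) ∈ [0, 1/2]`. The bound on `K` makes
`v` continuous, and then the same identity, read on difference quotients, gives
`v'(u₀) = -2u₀ K(v,v)`. The formula for `f'` follows by the quotient rule after eliminating `u₀²`
with the implicit equation.
-/

open Filter Topology

noncomputable section

def cauchyProfile (s w : ℝ) : ℝ := 1 / w * (1 + w) * (s - w - w ^ 2)

def cauchyGain (s a b : ℝ) : ℝ := a * b / (s + a * b * (2 + a + b))

variable {s : ℝ}

lemma cauchyGain_denom_pos (hs : 0 ≤ s) {a b : ℝ} (ha : 0 < a) (hb : 0 < b) :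
    0 < s + a * b * (2 + a + b) := by
  positivity

lemma sub_eq_neg_mul_cauchyGain (hs : 0 ≤ s) {a b : ℝ} (ha : 0 < a) (hb : 0 < b) :
    a - b = -((cauchyProfile s a - cauchyProfile s b) * cauchyGain s a b) := by
  have := cauchyGain_denom_pos hs ha hb
  unfold cauchyProfile cauchyGain
  field_simp
  ring

lemma cauchyGain_le_half (hs : 0 ≤ s) {a b : ℝ} (ha : 0 < a) (hb : 0 < b) :
    cauchyGain s a b ≤ 1 / 2 := by
  have hden := cauchyGain_denom_pos hs ha hb
  rw [cauchyGain, div_le_iff₀ hden]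
  nlinarith [mul_pos (mul_pos ha hb) (add_pos ha hb)]

lemma abs_sub_le_half_abs_cauchyProfile_sub (hs : 0 ≤ s) {a b : ℝ} (ha : 0 < a) (hb : 0 < b) :
    |a - b| ≤ |cauchyProfile s a - cauchyProfile s b| / 2 := by
  have hK : 0 ≤ cauchyGain s a b := by
    have := cauchyGain_denom_pos hs ha hb
    unfold cauchyGain; positivity
  rw [sub_eq_neg_mul_cauchyGain hs ha hb, abs_neg, abs_mul, abs_of_nonneg hK]
  have := cauchyGain_le_half hs ha hb
  nlinarith [abs_nonneg (cauchyProfile s a - cauchyProfile s b)]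

section Implicit

variable {v h : ℝ → ℝ} {u : ℝ}

lemma continuousAt_of_cauchyProfile_comp (hs : 0 ≤ s) (hpos : ∀ x, 0 < v x)
    (hv : ∀ x, cauchyProfile s (v x) = h x) (hh : ContinuousAt h u) : ContinuousAt v u := by
  rw [ContinuousAt, tendsto_iff_dist_tendsto_zero]
  have hh' : Tendsto (fun x => dist (h x) (h u) / 2) (𝓝 u) (𝓝 0) := by
    simpa using ((tendsto_iff_dist_tendsto_zero.mp hh).div_const 2)
  refine squeeze_zero (fun _ => dist_nonneg) (fun x => ?_) hh'
  simpa only [Real.dist_eq, hv] using abs_sub_le_half_abs_cauchyProfile_sub hs (hpos x) (hpos u)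

lemma hasDerivAt_of_cauchyProfile_comp (hs : 0 ≤ s) (hpos : ∀ x, 0 < v x)
    (hv : ∀ x, cauchyProfile s (v x) = h x) {h' : ℝ} (hh : HasDerivAt h h' u) :
    HasDerivAt v (-(h' * cauchyGain s (v u) (v u))) u := by
  have hcont := continuousAt_of_cauchyProfile_comp hs hpos hv hh.continuousAt
  have hslope : slope v u = fun x => -(slope h u x * cauchyGain s (v x) (v u)) := by
    ext x
    simp only [slope_def_field, ← hv]
    rw [sub_eq_neg_mul_cauchyGain hs (hpos x) (hpos u)]
    ring
  have hgain : ContinuousAt (fun x => cauchyGain s (v x) (v u)) u := by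
    have := cauchyGain_denom_pos hs (hpos u) (hpos u)
    unfold cauchyGain
    exact (hcont.mul continuousAt_const).div
      (continuousAt_const.add ((hcont.mul continuousAt_const).mul
        ((continuousAt_const.add hcont).add continuousAt_const))) this.ne'
  rw [hasDerivAt_iff_tendsto_slope] at hh ⊢
  rw [hslope]
  exact (hh.mul (hgain.tendsto.mono_left nhdsWithin_le_nhds)).neg

end Implicit

end

/-- Cauchy case: with `s = α+β`, `v = v_s(u₀)` defined implicitly by
`u₀² = (1/v)(1+v)(s−v−v²)`, and `u = f(u₀) = u₀ + ((α−β)/s) u₀ v/(1+v)`, one has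
`du/du₀ = ((1+v)(s² + 4αv²(1+v)) − (α−β)s v)/(s(1+v)(s + 2v²(1+v)))`. -/
theorem cauchy_f_deriv (α β s : ℝ) (hα : 0 ≤ α) (hβ : 0 < β) (hs : s = α + β)
    (v f : ℝ → ℝ)
    (hpos : ∀ u₀, 0 < v u₀)
    (himp : ∀ u₀ : ℝ, u₀ ^ 2 = (1 / v u₀) * (1 + v u₀) * (s - v u₀ - (v u₀) ^ 2))
    (hf : ∀ u₀ : ℝ, f u₀ = u₀ + ((α - β) / s) * (u₀ * v u₀ / (1 + v u₀))) :
    ∀ u₀ : ℝ, HasDerivAt f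
      (((1 + v u₀) * (s ^ 2 + 4 * α * (v u₀) ^ 2 * (1 + v u₀)) - (α - β) * s * v u₀) /
        (s * (1 + v u₀) * (s + 2 * (v u₀) ^ 2 * (1 + v u₀)))) u₀ := by
  intro u₀
  have hs0 : 0 < s := by linarith
  have hv : HasDerivAt v (-(2 * u₀ * cauchyGain s (v u₀) (v u₀))) u₀ := by
    simpa using hasDerivAt_of_cauchyProfile_comp hs0.le hpos (fun x => (himp x).symm)
      (hasDerivAt_pow 2 u₀)
  have hc := hpos u₀
  have h1v : 1 + v u₀ ≠ 0 := by positivity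
  rw [show f = fun x => x + (α - β) / s * (x * v x / (1 + v x)) from funext hf]
  refine ((hasDerivAt_id' u₀).add
    ((((hasDerivAt_id' u₀).mul hv).div (hv.const_add 1) h1v).const_mul ((α - β) / s))).congr_deriv ?_
  have hden := cauchyGain_denom_pos hs0.le hc hc
  have himp' : u₀ ^ 2 * v u₀ = (1 + v u₀) * (s - v u₀ - v u₀ ^ 2) := by
    rw [himp u₀]; field_simp
  simp only [cauchyGain, Pi.mul_apply]
  field_simp
  subst hs
  linear_combination (-2 * (α - β) * v u₀ * (α + β + 2 * v u₀ ^ 2 * (1 + v u₀))) * himp'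
end

section
/- Let μ be a probability measure on ℝ that is not a Dirac mass, and t > 0. Define v_t(u) = inf{v > 0 : ∫ dμ(x)/((u−x)²+v²) ≤ 1/t} (with inf ∅ interpreted via the convention that v_t(u)=0 when ∫ dμ(x)/(u−x)² ≤ 1/t). Then v_t(u) → 0 as |u| → ∞. -/
/-!
For fixed `v > 0`, the integrand `1 / ((u - x) ^ 2 + v ^ 2)` is a function of `u - x` that
vanishes at infinity and is bounded by `1 / v ^ 2`, so by dominated convergence (against the
finite measure `μ`) the integral tends to `0` as `|u| → ∞`. Hence, for `|u|` large, `v` belongs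
to the set whose infimum is `v_t(u)`, and `0 ≤ v_t(u) ≤ v`.
-/

open MeasureTheory Filter Topology

theorem tendsto_integral_comp_sub_cocompact {E : Type*} [NormedAddCommGroup E] [ProperSpace E]
    [MeasurableSpace E] [OpensMeasurableSpace E] (μ : Measure E) [IsFiniteMeasure μ]
    (g : ZeroAtInftyContinuousMap E ℝ) :
    Tendsto (fun u => ∫ x, g (u - x) ∂μ) (cocompact E) (𝓝 0) := by
  -- `cocompact E = comap norm atTop` is countably generated, as dominated convergence requires.
  rw [← Metric.cobounded_eq_cocompact, ← comap_norm_atTop]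
  have h := tendsto_integral_filter_of_dominated_convergence (μ := μ) (l := comap norm atTop)
    (F := fun u x => g (u - x)) (f := 0) (fun _ => ‖g.toBCF‖)
    (.of_forall fun u => (g.continuous.comp (continuous_sub_left u)).aestronglyMeasurable)
    (.of_forall fun u => ae_of_all _ fun x => g.toBCF.norm_coe_le_norm (u - x))
    (integrable_const _)
    (ae_of_all _ fun x => ?_)
  · simpa using h
  rw [comap_norm_atTop, Metric.cobounded_eq_cocompact]
  exact g.zero_at_infty'.comp (Homeomorph.subRight x).map_cocompact.le

noncomputable def oneDivSqAddSq (e : ℝ) (he : e ≠ 0) : ZeroAtInftyContinuousMap ℝ ℝ where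
  toFun x := 1 / (x ^ 2 + e ^ 2)
  continuous_toFun := by
    have : ∀ x : ℝ, x ^ 2 + e ^ 2 ≠ 0 := fun x => by positivity
    fun_prop (disch := exact this _)
  zero_at_infty' := by
    simp only [one_div]
    refine Tendsto.inv_tendsto_atTop (tendsto_atTop_add_const_right _ _ ?_)
    simpa only [Function.comp_def, Real.norm_eq_abs, sq_abs] using
      (tendsto_pow_atTop two_ne_zero).comp (tendsto_norm_cocompact_atTop (E := ℝ))

theorem vt_tendsto_zero_general (μ : Measure ℝ) [IsProbabilityMeasure μ]
    (t : ℝ) (ht : 0 < t) :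
    Tendsto (fun u : ℝ =>
        sInf {v : ℝ | 0 < v ∧ (∫ x, 1 / ((u - x) ^ 2 + v ^ 2) ∂μ) ≤ 1 / t})
      (cocompact ℝ) (nhds 0) := by
  have small_integral : ∀ e > 0, ∀ᶠ u in cocompact ℝ, ∫ x, 1 / ((u - x) ^ 2 + e ^ 2) ∂μ ≤ 1 / t :=
    fun e he => (tendsto_integral_comp_sub_cocompact μ (oneDivSqAddSq e he.ne')).eventually
      (ge_mem_nhds (by positivity))
  refine tendsto_order.2 ⟨fun a ha => .of_forall fun u => ha.trans_le
    (Real.sInf_nonneg fun v hv => hv.1.le), fun a ha => ?_⟩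
  filter_upwards [small_integral (a / 2) (half_pos ha)] with u hu
  refine lt_of_le_of_lt ?_ (half_lt_self ha)
  exact csInf_le ⟨0, fun v hv => hv.1.le⟩ ⟨half_pos ha, hu⟩

/-- Let `μ` be a probability measure on `ℝ` that is not a Dirac mass, and `t > 0`. With
`v_t(u) = inf{v > 0 : ∫ dμ(x)/((u−x)²+v²) ≤ 1/t}`, one has `v_t(u) → 0` as `|u| → ∞`. -/
theorem vt_tendsto_zero (μ : Measure ℝ) [IsProbabilityMeasure μ]
    (hμ : ∀ a : ℝ, μ ≠ Measure.dirac a) (t : ℝ) (ht : 0 < t) :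
    Tendsto (fun u : ℝ =>
        sInf {v : ℝ | 0 < v ∧ (∫ x, 1 / ((u - x) ^ 2 + v ^ 2) ∂μ) ≤ 1 / t})
      (cocompact ℝ) (nhds 0) :=
  vt_tendsto_zero_general μ t ht
end
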